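/- Under the centered model and for any λ ≥ 0, a point (0, cμ) with c ∈ ℝ, c ≠ 0, is a stationary point of the quartic population loss L^h_λ (i.e. ∇L^h_λ(0, cμ) = 0) if and only if (‖μ‖₂⁴ + 6‖μ‖₂² + M_Z)‖μ‖₂² c² = ‖μ‖₂² + 1. Moreover (0, 0) is always a stationary point of L^h_λ. -/

import Mathlib

open MeasureTheory ProbabilityTheory
open scoped RealInnerProductSpace

/-- `ℝ^d` with the Euclidean norm. -/
abbrev Vec (d : ℕ) := EuclideanSpace ℝ (Fin d)

/-- `ℝ × ℝ^d` with the Euclidean (ℓ²) norm, the domain of the loss `(α, β) ↦ L(α, β)`. -/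
abbrev Pr (d : ℕ) := WithLp 2 (ℝ × Vec d)

/-- Build the point `(α, β) ∈ ℝ × ℝ^d`. -/
noncomputable def mkp {d : ℕ} (α : ℝ) (β : Vec d) : Pr d :=
  (WithLp.equiv 2 (ℝ × Vec d)).symm (α, β)

/-- The quartic loss `h(x) = (x² - 1)² / 4`. -/
noncomputable def hq (x : ℝ) : ℝ := (x ^ 2 - 1) ^ 2 / 4

/-- The population loss `γ = (α, β) ↦ E g(α + β⊤X) + (λ/2) α²` built from a scalar loss `g`. -/
noncomputable def popLoss {d : ℕ} {Ω : Type*} [MeasurableSpace Ω] (P : Measure Ω)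
    (X : Ω → Vec d) (g : ℝ → ℝ) (lam : ℝ) (γ : Pr d) : ℝ :=
  (∫ ω, g ((WithLp.equiv 2 (ℝ × Vec d) γ).1 + ⟪(WithLp.equiv 2 (ℝ × Vec d) γ).2, X ω⟫) ∂P)
    + lam / 2 * ((WithLp.equiv 2 (ℝ × Vec d) γ).1) ^ 2

/-! Write `X = Yμ + Z`. As `Y` is a fair sign independent of `Z`, `E F(Y, Z)` is the average of
`E F(1, Z)` and `E F(-1, Z)`, and the odd moments of `⟪β, Z⟫` vanish because `-Z` has the law of
`Z`. Hence `E h(α + ⟪β, X⟫)` only involves `E⟪β, Z⟫² = ‖β‖²` and `E⟪β, Z⟫⁴ = M_Z ‖β‖⁴`, and the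
population loss is an explicit polynomial in `α`, `⟪β, μ⟫` and `‖β‖²`. Its gradient at `(0, cμ)`
is `(0, c ((‖μ‖⁴ + 6‖μ‖² + M_Z)‖μ‖²c² - ‖μ‖² - 1) μ)`. -/

lemma hq_add (c v : ℝ) :
    hq (c + v) = (c ^ 4 - 2 * c ^ 2 + 1) / 4 + (c ^ 3 - c) * v + (3 * c ^ 2 - 1) / 2 * v ^ 2
      + c * v ^ 3 + v ^ 4 / 4 := by
  unfold hq
  ring

section Probability

variable {Ω : Type*} [MeasurableSpace Ω] {P : Measure Ω}

lemma integral_eq_zero_of_eq_one_or_neg_one [IsFiniteMeasure P] {Y : Ω → ℝ} (hY : Measurable Y)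
    (hYpm : ∀ ω, Y ω = 1 ∨ Y ω = -1) (hY12 : P {ω | Y ω = 1} = P {ω | Y ω = -1}) :
    ∫ ω, Y ω ∂P = 0 := by
  have hA : MeasurableSet {ω | Y ω = 1} := hY (measurableSet_singleton 1)
  have hB : MeasurableSet {ω | Y ω = -1} := hY (measurableSet_singleton (-1))
  have hsplit : Y = fun ω => {ω | Y ω = 1}.indicator 1 ω - {ω | Y ω = -1}.indicator 1 ω := by
    ext ω
    rcases hYpm ω with h | h <;> norm_num [Set.indicator_apply, h]
  rw [hsplit, integral_sub ((integrable_const 1).indicator hA) ((integrable_const 1).indicator hB),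
    integral_indicator_one hA, integral_indicator_one hB, measureReal_def, measureReal_def, hY12,
    sub_self]

lemma integral_comp_eq_half_add_of_indepFun {E : Type*} [MeasurableSpace E] {Y : Ω → ℝ}
    {Z : Ω → E} (hY : Measurable Y) (hYpm : ∀ ω, Y ω = 1 ∨ Y ω = -1) (hY0 : ∫ ω, Y ω ∂P = 0)
    (hindep : IndepFun Y Z P) {F : ℝ → E → ℝ} (hF1 : Measurable (F 1))
    (hF2 : Measurable (F (-1))) (hF1i : Integrable (fun ω => F 1 (Z ω)) P)
    (hF2i : Integrable (fun ω => F (-1) (Z ω)) P) :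
    ∫ ω, F (Y ω) (Z ω) ∂P = (∫ ω, F 1 (Z ω) ∂P + ∫ ω, F (-1) (Z ω) ∂P) / 2 := by
  set G : E → ℝ := fun z => (F 1 z - F (-1) z) / 2
  have hsplit : (fun ω => F (Y ω) (Z ω))
      = fun ω => (F 1 (Z ω) + F (-1) (Z ω)) / 2 + Y ω * G (Z ω) := by
    ext ω
    rcases hYpm ω with h | h <;> simp only [G, h] <;> ring
  have hGi : Integrable (fun ω => G (Z ω)) P := (hF1i.sub hF2i).div_const 2
  have hYG : ∫ ω, Y ω * G (Z ω) ∂P = 0 := by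
    have hind : IndepFun Y (fun ω => G (Z ω)) P :=
      hindep.comp measurable_id ((hF1.sub hF2).div_const 2)
    rw [hind.integral_fun_mul_eq_mul_integral hY.aestronglyMeasurable hGi.aestronglyMeasurable,
      hY0, zero_mul]
  have hYGi : Integrable (fun ω => Y ω * G (Z ω)) P := by
    refine hGi.bdd_mul hY.aestronglyMeasurable (c := 1) (Filter.Eventually.of_forall fun ω => ?_)
    rcases hYpm ω with h | h <;> simp [h]
  have hmean : Integrable (fun ω => (F 1 (Z ω) + F (-1) (Z ω)) / 2) P :=
    (hF1i.add hF2i).div_const 2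
  rw [hsplit, integral_add hmean hYGi, hYG, add_zero, integral_div,
    integral_add hF1i hF2i]

lemma integral_comp_eq_zero_of_map_neg_eq {E : Type*} [MeasurableSpace E] [Neg E]
    [MeasurableNeg E] {Z : Ω → E} (hZ : AEMeasurable Z P)
    (hsymm : P.map (fun ω => -Z ω) = P.map Z) {f : E → ℝ} (hf : Measurable f)
    (hodd : ∀ z, f (-z) = -f z) : ∫ ω, f (Z ω) ∂P = 0 := by
  have h : ∫ ω, f (Z ω) ∂P = ∫ ω, f (-Z ω) ∂P := by
    rw [← integral_map hZ hf.aestronglyMeasurable, ← hsymm]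
    exact integral_map hZ.neg hf.aestronglyMeasurable
  simp only [hodd, integral_neg] at h
  linarith

lemma MeasureTheory.MemLp.integrable_pow_of_le [IsFiniteMeasure P] {V : Ω → ℝ} {p : ℕ}
    (hV : MemLp V p P) {n : ℕ} (hn : n ≤ p) : Integrable (fun ω => V ω ^ n) P := by
  refine (integrable_norm_iff (f := fun ω => V ω ^ n) (hV.1.pow n)).mp ?_
  simpa only [norm_pow] using (hV.mono_exponent (by exact_mod_cast hn)).integrable_norm_pow'

section Quartic

variable [IsProbabilityMeasure P] {V : Ω → ℝ}

lemma integrable_hq_add (hV : MemLp V 4 P) (c : ℝ) : Integrable (fun ω => hq (c + V ω)) P := by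
  have h1 := hV.integrable_pow_of_le (n := 1) (p := 4) (by norm_num)
  have h2 := hV.integrable_pow_of_le (n := 2) (p := 4) (by norm_num)
  have h3 := hV.integrable_pow_of_le (n := 3) (p := 4) (by norm_num)
  have h4 := hV.integrable_pow_of_le (n := 4) (p := 4) (by norm_num)
  simp only [pow_one] at h1
  simp only [hq_add]
  fun_prop

lemma integral_hq_add (hV : MemLp V 4 P) (c : ℝ) :
    ∫ ω, hq (c + V ω) ∂P = (c ^ 4 - 2 * c ^ 2 + 1) / 4 + (c ^ 3 - c) * ∫ ω, V ω ∂P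
      + (3 * c ^ 2 - 1) / 2 * ∫ ω, V ω ^ 2 ∂P + c * ∫ ω, V ω ^ 3 ∂P + (∫ ω, V ω ^ 4 ∂P) / 4 := by
  have h1 := hV.integrable_pow_of_le (n := 1) (p := 4) (by norm_num)
  have h2 := hV.integrable_pow_of_le (n := 2) (p := 4) (by norm_num)
  have h3 := hV.integrable_pow_of_le (n := 3) (p := 4) (by norm_num)
  have h4 := hV.integrable_pow_of_le (n := 4) (p := 4) (by norm_num)
  simp only [pow_one] at h1
  simp only [hq_add]
  rw [integral_add (by fun_prop) (by fun_prop), integral_add (by fun_prop) (by fun_prop),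
    integral_add (by fun_prop) (by fun_prop), integral_add (by fun_prop) (by fun_prop),
    integral_const, integral_const_mul, integral_const_mul, integral_const_mul, integral_div]
  simp

end Quartic

section InnerProduct

variable {E : Type*} [NormedAddCommGroup E] [InnerProductSpace ℝ E]

lemma inner_eq_norm_mul_inner_inv_norm_smul (b z : E) : ⟪b, z⟫ = ‖b‖ * ⟪‖b‖⁻¹ • b, z⟫ := by
  rcases eq_or_ne b 0 with rfl | hb
  · simp
  · rw [real_inner_smul_left, mul_inv_cancel_left₀ (norm_ne_zero_iff.mpr hb)]

lemma norm_inv_norm_smul_self {b : E} (hb : b ≠ 0) : ‖‖b‖⁻¹ • b‖ = 1 := by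
  rw [norm_smul, norm_inv, norm_norm, inv_mul_cancel₀ (norm_ne_zero_iff.mpr hb)]

variable {Z : Ω → E}

lemma memLp_inner_of_forall_norm_eq_one {p : ENNReal}
    (hZ : ∀ u : E, ‖u‖ = 1 → MemLp (fun ω => ⟪u, Z ω⟫) p P) (b : E) :
    MemLp (fun ω => ⟪b, Z ω⟫) p P := by
  rcases eq_or_ne b 0 with rfl | hb
  · simp
  · simp_rw [inner_eq_norm_mul_inner_inv_norm_smul b]
    exact (hZ _ (norm_inv_norm_smul_self hb)).const_mul _

lemma integral_inner_pow_four_of_forall_norm_eq_one {M : ℝ}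
    (hZ : ∀ u : E, ‖u‖ = 1 → ∫ ω, ⟪u, Z ω⟫ ^ 4 ∂P = M) (b : E) :
    ∫ ω, ⟪b, Z ω⟫ ^ 4 ∂P = M * ‖b‖ ^ 4 := by
  rcases eq_or_ne b 0 with rfl | hb
  · simp
  · simp_rw [inner_eq_norm_mul_inner_inv_norm_smul b, mul_pow]
    rw [integral_const_mul, hZ _ (norm_inv_norm_smul_self hb), mul_comm]

lemma integral_hq_add_inner [IsProbabilityMeasure P] [MeasurableSpace E] [BorelSpace E]
    {Y : Ω → ℝ} {X : Ω → E} {μ : E} {M : ℝ} (hY : Measurable Y) (hZ : Measurable Z)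
    (hYpm : ∀ ω, Y ω = 1 ∨ Y ω = -1) (hY12 : P {ω | Y ω = 1} = P {ω | Y ω = -1})
    (hindep : IndepFun Y Z P) (hZ4 : ∀ u : E, ‖u‖ = 1 → MemLp (fun ω => ⟪u, Z ω⟫) 4 P)
    (hZcov : ∀ u v : E, ∫ ω, ⟪u, Z ω⟫ * ⟪v, Z ω⟫ ∂P = ⟪u, v⟫)
    (hZneg : P.map (fun ω => -Z ω) = P.map Z)
    (hM : ∀ u : E, ‖u‖ = 1 → ∫ ω, ⟪u, Z ω⟫ ^ 4 ∂P = M)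
    (hX : ∀ ω, X ω = Y ω • μ + Z ω) (a : ℝ) (b : E) :
    ∫ ω, hq (a + ⟪b, X ω⟫) ∂P
      = (a ^ 4 + 6 * a ^ 2 * (⟪b, μ⟫ ^ 2 + ‖b‖ ^ 2) + ⟪b, μ⟫ ^ 4 + 6 * ⟪b, μ⟫ ^ 2 * ‖b‖ ^ 2
          + M * ‖b‖ ^ 4 - 2 * (a ^ 2 + ⟪b, μ⟫ ^ 2 + ‖b‖ ^ 2) + 1) / 4 := by
  have hW : MemLp (fun ω => ⟪b, Z ω⟫) 4 P := memLp_inner_of_forall_norm_eq_one hZ4 b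
  have hodd : ∀ n, Odd n → ∫ ω, ⟪b, Z ω⟫ ^ n ∂P = 0 := fun n hn =>
    integral_comp_eq_zero_of_map_neg_eq (f := fun z => ⟪b, z⟫ ^ n) hZ.aemeasurable hZneg
      (by fun_prop) (fun z => by rw [inner_neg_right, hn.neg_pow])
  have hW1 : ∫ ω, ⟪b, Z ω⟫ ∂P = 0 := by simpa using hodd 1 odd_one
  have hW2 : ∫ ω, ⟪b, Z ω⟫ ^ 2 ∂P = ‖b‖ ^ 2 := by
    simpa only [sq, real_inner_self_eq_norm_mul_norm] using hZcov b b
  have hF : ∀ y : ℝ, Measurable fun z : E => hq (a + y * ⟪b, μ⟫ + ⟪b, z⟫) := fun y => by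
    unfold hq
    fun_prop
  calc ∫ ω, hq (a + ⟪b, X ω⟫) ∂P = ∫ ω, hq (a + Y ω * ⟪b, μ⟫ + ⟪b, Z ω⟫) ∂P := by
        simp_rw [hX, inner_add_right, real_inner_smul_right, add_assoc]
    _ = (∫ ω, hq (a + 1 * ⟪b, μ⟫ + ⟪b, Z ω⟫) ∂P + ∫ ω, hq (a + -1 * ⟪b, μ⟫ + ⟪b, Z ω⟫) ∂P) / 2 :=
        integral_comp_eq_half_add_of_indepFun (F := fun y z => hq (a + y * ⟪b, μ⟫ + ⟪b, z⟫))
          hY hYpm (integral_eq_zero_of_eq_one_or_neg_one hY hYpm hY12) hindep (hF 1) (hF (-1))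
          (integrable_hq_add hW _) (integrable_hq_add hW _)
    _ = _ := by
        rw [integral_hq_add hW, integral_hq_add hW, hW1, hW2, hodd 3 (by decide),
          integral_inner_pow_four_of_forall_norm_eq_one hM]
        ring

end InnerProduct
end Probability

@[simp]
lemma mkp_fst {d : ℕ} (α : ℝ) (β : Vec d) : (mkp α β).fst = α := rfl

@[simp]
lemma mkp_snd {d : ℕ} (α : ℝ) (β : Vec d) : (mkp α β).snd = β := rfl

lemma mkp_eq_zero {d : ℕ} {α : ℝ} {β : Vec d} : mkp α β = 0 ↔ α = 0 ∧ β = 0 := by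
  refine ⟨fun h => ⟨congrArg WithLp.fst h, congrArg WithLp.snd h⟩, ?_⟩
  rintro ⟨rfl, rfl⟩
  rfl

/-- Closed form of `popLoss P X hq lam` under the centered model, with `M = M_Z`. -/
noncomputable def quarticLoss {d : ℕ} (μ : Vec d) (M lam : ℝ) (γ : Pr d) : ℝ :=
  (γ.fst ^ 4 + 6 * γ.fst ^ 2 * (⟪γ.snd, μ⟫ ^ 2 + ‖γ.snd‖ ^ 2) + ⟪γ.snd, μ⟫ ^ 4
      + 6 * ⟪γ.snd, μ⟫ ^ 2 * ‖γ.snd‖ ^ 2 + M * ‖γ.snd‖ ^ 4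
      - 2 * (γ.fst ^ 2 + ⟪γ.snd, μ⟫ ^ 2 + ‖γ.snd‖ ^ 2) + 1) / 4
    + lam / 2 * γ.fst ^ 2

lemma hasGradientAt_quarticLoss {d : ℕ} (μ : Vec d) (M lam α : ℝ) (β : Vec d) :
    HasGradientAt (quarticLoss μ M lam)
      (mkp (α ^ 3 + 3 * α * (⟪β, μ⟫ ^ 2 + ‖β‖ ^ 2) - α + lam * α)
        ((3 * α ^ 2 * ⟪β, μ⟫ + ⟪β, μ⟫ ^ 3 + 3 * ⟪β, μ⟫ * ‖β‖ ^ 2 - ⟪β, μ⟫) • μ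
          + (3 * α ^ 2 + 3 * ⟪β, μ⟫ ^ 2 + M * ‖β‖ ^ 2 - 1) • β))
      (mkp α β) := by
  rw [hasGradientAt_iff_hasFDerivAt]
  have ha := (WithLp.fstL 2 ℝ ℝ (Vec d)).hasFDerivAt (x := mkp α β)
  have hb := (WithLp.sndL 2 ℝ ℝ (Vec d)).hasFDerivAt (x := mkp α β)
  have hs := hb.inner ℝ (hasFDerivAt_const μ _)
  have hq := hb.norm_sq
  -- the combinators follow the expression tree of `quarticLoss` up to `ring`
  refine HasFDerivAt.congr_fderiv (HasFDerivAt.congr_of_eventuallyEq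
    (((((((((ha.pow 4).add (((ha.pow 2).mul ((hs.pow 2).add hq)).const_mul 6)).add
    (hs.pow 4)).add (((hs.pow 2).mul hq).const_mul 6)).add ((hq.pow 2).const_mul M)).sub
    ((((ha.pow 2).add (hs.pow 2)).add hq).const_mul 2)).add_const 1).mul_const 4⁻¹).add
    ((ha.pow 2).const_mul (lam / 2))) (Filter.Eventually.of_forall fun γ => ?_)) ?_
  · simp only [quarticLoss, Pi.add_apply, Pi.sub_apply, Pi.mul_apply, WithLp.fstL_apply,
      WithLp.sndL_apply]
    ring
  · ext v
    simp only [WithLp.fstL_apply, mkp_fst, Nat.add_one_sub_one, nsmul_eq_mul, Nat.cast_ofNat,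
      WithLp.sndL_apply, mkp_snd, real_inner_comm μ, pow_one, smul_add, Pi.add_apply, add_apply,
      smul_apply, sub_apply, smul_eq_mul, ContinuousLinearMap.comp_apply,
      ContinuousLinearMap.prod_apply, zero_apply, fderivInnerCLM_apply,
      inner_zero_right, zero_add, coe_innerSL_apply, InnerProductSpace.toDual_apply_apply,
      WithLp.prod_inner_apply, WithLp.ofLp_fst, RCLike.inner_apply, Real.ringHom_apply,
      WithLp.ofLp_snd, inner_add_left, real_inner_smul_left]
    ring

lemma gradient_quarticLoss_signal {d : ℕ} (μ : Vec d) (M lam c : ℝ) :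
    gradient (quarticLoss μ M lam) (mkp 0 (c • μ))
      = mkp 0 ((c * ((‖μ‖ ^ 4 + 6 * ‖μ‖ ^ 2 + M) * ‖μ‖ ^ 2 * c ^ 2 - (‖μ‖ ^ 2 + 1))) • μ) := by
  rw [(hasGradientAt_quarticLoss μ M lam 0 (c • μ)).gradient, smul_smul, ← add_smul]
  congr 2
  · ring
  · simp only [real_inner_smul_left, real_inner_self_eq_norm_sq, norm_smul, Real.norm_eq_abs,
      mul_pow, sq_abs]
    ring

theorem quartic_population_loss_stationary_on_signal_line_general
    {d : ℕ} {Ω : Type*} [MeasurableSpace Ω] (P : Measure Ω) [IsProbabilityMeasure P]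
    (Y : Ω → ℝ) (Z : Ω → Vec d) (X : Ω → Vec d) (μ : Vec d) (M MZ lam : ℝ)
    (hμ : μ ≠ 0)
    (hY : Measurable Y) (hZ : Measurable Z)
    (hYpm : ∀ ω, Y ω = 1 ∨ Y ω = -1)
    (hY1 : P {ω | Y ω = 1} = 1 / 2) (hY2 : P {ω | Y ω = -1} = 1 / 2)
    (hindep : IndepFun Y Z P)
    (hZsg : ∀ u : Vec d, ‖u‖ = 1 → ∀ p : ℝ, 1 ≤ p →
      Integrable (fun ω => |⟪u, Z ω⟫| ^ p) P ∧
        (∫ ω, |⟪u, Z ω⟫| ^ p ∂P) ^ (1 / p) ≤ Real.sqrt p * M)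
    (hZcov : ∀ u v : Vec d, (∫ ω, ⟪u, Z ω⟫ * ⟪v, Z ω⟫ ∂P) = ⟪u, v⟫)
    (hZsym : ∀ O : Vec d ≃ₗᵢ[ℝ] Vec d,
      Measure.map (fun ω => O (Z ω)) P = Measure.map Z P)
    (hMZ : ∀ u : Vec d, ‖u‖ = 1 → (∫ ω, ⟪u, Z ω⟫ ^ 4 ∂P) = MZ)
    (hX : ∀ ω, X ω = Y ω • μ + Z ω)
    :
    (∀ c : ℝ, c ≠ 0 →
      (gradient (popLoss P X hq lam) (mkp 0 (c • μ)) = 0 ↔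
        (‖μ‖ ^ 4 + 6 * ‖μ‖ ^ 2 + MZ) * ‖μ‖ ^ 2 * c ^ 2 = ‖μ‖ ^ 2 + 1)) ∧
    gradient (popLoss P X hq lam) (mkp 0 0) = 0 := by
  have hZneg : P.map (fun ω => -Z ω) = P.map Z := by
    simpa using hZsym (LinearIsometryEquiv.neg ℝ)
  have hZ4 : ∀ u : Vec d, ‖u‖ = 1 → MemLp (fun ω => ⟪u, Z ω⟫) 4 P := fun u hu => by
    rw [← integrable_norm_rpow_iff (by fun_prop) (by norm_num) (by norm_num)]
    simpa using (hZsg u hu 4 (by norm_num)).1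
  have hloss : popLoss P X hq lam = quarticLoss μ MZ lam := by
    funext γ
    rw [popLoss, integral_hq_add_inner hY hZ hYpm (hY1.trans hY2.symm) hindep hZ4 hZcov hZneg hMZ
      hX]
    rfl
  rw [hloss]
  refine ⟨fun c hc => ?_, ?_⟩
  · rw [gradient_quarticLoss_signal, mkp_eq_zero, smul_eq_zero, mul_eq_zero, sub_eq_zero]
    simp [hc, hμ]
  · simpa using (gradient_quarticLoss_signal μ MZ lam 0).trans (mkp_eq_zero.2 ⟨rfl, by simp⟩)

/-- under the centered model and for any `λ ≥ 0`, a point `(0, cμ)` with `c ≠ 0`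
is a stationary point of `L^h_λ` iff `(‖μ‖⁴ + 6‖μ‖² + M_Z)‖μ‖² c² = ‖μ‖² + 1`; moreover
`(0, 0)` is always a stationary point. -/
theorem quartic_population_loss_stationary_on_signal_line
    {d : ℕ} {Ω : Type*} [MeasurableSpace Ω] (P : Measure Ω) [IsProbabilityMeasure P]
    (Y : Ω → ℝ) (Z : Ω → Vec d) (X : Ω → Vec d) (μ : Vec d) (M MZ lam : ℝ)
    (hμ : μ ≠ 0) (hlam : 0 ≤ lam)
    (hY : Measurable Y) (hZ : Measurable Z)
    (hYpm : ∀ ω, Y ω = 1 ∨ Y ω = -1)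
    (hY1 : P {ω | Y ω = 1} = 1 / 2) (hY2 : P {ω | Y ω = -1} = 1 / 2)
    (hindep : IndepFun Y Z P)
    (hZsg : ∀ u : Vec d, ‖u‖ = 1 → ∀ p : ℝ, 1 ≤ p →
      Integrable (fun ω => |⟪u, Z ω⟫| ^ p) P ∧
        (∫ ω, |⟪u, Z ω⟫| ^ p ∂P) ^ (1 / p) ≤ Real.sqrt p * M)
    (hZmean : (∫ ω, Z ω ∂P) = 0)
    (hZcov : ∀ u v : Vec d, (∫ ω, ⟪u, Z ω⟫ * ⟪v, Z ω⟫ ∂P) = ⟪u, v⟫)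
    (hZsym : ∀ O : Vec d ≃ₗᵢ[ℝ] Vec d,
      Measure.map (fun ω => O (Z ω)) P = Measure.map Z P)
    (hMZ : ∀ u : Vec d, ‖u‖ = 1 → (∫ ω, ⟪u, Z ω⟫ ^ 4 ∂P) = MZ)
    (hX : ∀ ω, X ω = Y ω • μ + Z ω)
    :
    (∀ c : ℝ, c ≠ 0 →
      (gradient (popLoss P X hq lam) (mkp 0 (c • μ)) = 0 ↔
        (‖μ‖ ^ 4 + 6 * ‖μ‖ ^ 2 + MZ) * ‖μ‖ ^ 2 * c ^ 2 = ‖μ‖ ^ 2 + 1)) ∧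
    gradient (popLoss P X hq lam) (mkp 0 0) = 0 :=
  quartic_population_loss_stationary_on_signal_line_general P Y Z X μ M MZ lam hμ hY hZ hYpm hY1 hY2
    hindep hZsg hZcov hZsym hMZ hX
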